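/- Let v and u be K-adjacent x-vertices (some K-edge joins v and u). Then for every feasible solution x*, the output values of the local algorithm satisfy x_v + x_u ≥ (1 − 1/R)·ω(x*). Consequently, together with the corresponding bound when one endpoint of a K-edge is a 0-vertex, the output of the algorithm is a feasible solution whose utility is at least (1 − 1/R) times the optimal utility. -/
import Mathlib


/-- An undirected multigraph with two-coloured vertices and two-coloured edges.
`isX v` means `v` is an x-vertex (otherwise `v` is a 0-vertex);
`isK e` means `e` is a K-edge (otherwise `e` is an I-edge). -/
structure ColoredMultigraph (V : Type) (E : Type) where
  ends : E → Sym2 V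
  isX : V → Prop
  isK : E → Prop

namespace ColoredMultigraph

variable {V E : Type} (G : ColoredMultigraph V E)

/-- Edge `e` joins vertices `a` and `b`. -/
def Joins (e : E) (a b : V) : Prop := G.ends e = s(a, b)

/-- `AltWalk G v c c' u n` : there is an alternating walk from `v` to `u` whose
first edge has colour `c` (`true` = K-edge, `false` = I-edge), whose last edge
has colour `c'`, and whose K-length (number of K-edges) is `n`. -/
inductive AltWalk : V → Bool → Bool → V → ℕ → Prop
  | single (e : E) (a b : V) (c : Bool) :
      G.Joins e a b → (G.isK e ↔ c = true) → AltWalk a c c b (cond c 1 0)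
  | cons (e : E) (a b : V) (c c' : Bool) (u : V) (n : ℕ) :
      G.Joins e a b → (G.isK e ↔ c = true) → AltWalk b (!c) c' u n →
      AltWalk a c c' u (cond c 1 0 + n)

/-- `a(v,X,Y,0)` : the minimum K-length of a `(v,X,Y,0)`-walk, that is, a walk
from `v` to some 0-vertex starting with an X-edge and ending with a Y-edge
(`∞` if no such walk exists). -/
noncomputable def walkInf (v : V) (X Y : Bool) : ℕ∞ :=
  sInf {n : ℕ∞ | ∃ m : ℕ, n = m ∧ ∃ u, G.AltWalk v X Y u m ∧ ¬ G.isX u}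

/-- `A(v,X)` : the maximum K-length of an alternating walk starting at `v` with
an X-edge (`∞` if walks of arbitrarily large K-length exist). -/
noncomputable def walkSup (v : V) (X : Bool) : ℕ∞ :=
  sSup {n : ℕ∞ | ∃ m : ℕ, n = m ∧ ∃ Y u, G.AltWalk v X Y u m}

/-- `b(v,X,Y,0) = min {a(v,X,Y,0), R}`. -/
noncomputable def bnd (R : ℕ) (v : V) (X Y : Bool) : ℕ∞ :=
  min (G.walkInf v X Y) (R : ℕ∞)

/-- `B(v,X) = min {A(v,X), R}`. -/
noncomputable def Bnd (R : ℕ) (v : V) (X : Bool) : ℕ∞ :=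
  min (G.walkSup v X) (R : ℕ∞)

/-- The value `p_v` chosen by the local algorithm:
`p_v = b(v,I,K,0)` if `a(v,K,K,0) ≤ R`, and
`p_v = min {b(v,I,K,0), B(v,K)}` otherwise. -/
noncomputable def pv (R : ℕ) (v : V) : ℕ∞ :=
  if G.walkInf v true true ≤ (R : ℕ∞) then G.bnd R v false true
  else min (G.bnd R v false true) (G.Bnd R v true)

/-- The value `q_v` chosen by the local algorithm:
`q_v = b(v,K,K,0)` if `a(v,I,K,0) ≤ R`, and
`q_v = min {b(v,K,K,0), B(v,I)}` otherwise. -/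
noncomputable def qv (R : ℕ) (v : V) : ℕ∞ :=
  if G.walkInf v false true ≤ (R : ℕ∞) then G.bnd R v true true
  else min (G.bnd R v true true) (G.Bnd R v false)

open Classical in
/-- The output value of the local algorithm: `p_v / (p_v + q_v)` at an x-vertex
`v`, and `0` at a 0-vertex. -/
noncomputable def xval (R : ℕ) (v : V) : ℝ :=
  if G.isX v then
    ((G.pv R v).toNat : ℝ) / (((G.pv R v).toNat : ℝ) + ((G.qv R v).toNat : ℝ))
  else 0

/-- Structural assumptions: every x-vertex is incident to at least one K-edge
and at least one I-edge, every 0-vertex is incident to exactly one edge, and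
every edge has at least one x-vertex endpoint. -/
def WellFormed : Prop :=
  (∀ v, G.isX v → ∃ e, v ∈ G.ends e ∧ G.isK e) ∧
  (∀ v, G.isX v → ∃ e, v ∈ G.ends e ∧ ¬ G.isK e) ∧
  (∀ v, ¬ G.isX v → ∃! e, v ∈ G.ends e) ∧
  (∀ e a b, G.Joins e a b → G.isX a ∨ G.isX b)

/-- A feasible solution: nonnegative, zero at 0-vertices, and satisfying
`x a + x b ≤ 1` for every I-edge `{a, b}`. -/
def Feasible (x : V → ℝ) : Prop :=
  (∀ a, 0 ≤ x a) ∧ (∀ a, ¬ G.isX a → x a = 0) ∧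
  (∀ e a b, G.Joins e a b → ¬ G.isK e → x a + x b ≤ 1)

/-- The utility `ω(x)` of a solution: the minimum (infimum) over K-edges
`{a, b}` of `x a + x b`. -/
noncomputable def utility (x : V → ℝ) : ℝ :=
  sInf {r : ℝ | ∃ e a b, G.Joins e a b ∧ G.isK e ∧ r = x a + x b}

end ColoredMultigraph

section Helpers

variable {P : ℕ → Prop}

lemma enat_sInf_le {m : ℕ} (h : P m) :
    sInf {n : ℕ∞ | ∃ k : ℕ, n = k ∧ P k} ≤ (m : ℕ∞) := sInf_le ⟨m, rfl, h⟩

lemma enat_one_le_sInf (h : ∀ m, P m → 1 ≤ m) :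
    1 ≤ sInf {n : ℕ∞ | ∃ k : ℕ, n = k ∧ P k} := by
  refine le_sInf ?_
  rintro n ⟨k, rfl, hk⟩
  exact_mod_cast h k hk

lemma enat_sInf_attain {r : ℕ} (h : sInf {n : ℕ∞ | ∃ k : ℕ, n = k ∧ P k} ≤ (r : ℕ∞)) :
    ∃ m, P m ∧ sInf {n : ℕ∞ | ∃ k : ℕ, n = k ∧ P k} = (m : ℕ∞) ∧ m ≤ r := by
  classical
  have hne : ∃ k, P k := by
    by_contra hc
    push_neg at hc
    have he : {n : ℕ∞ | ∃ k : ℕ, n = k ∧ P k} = ∅ := by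
      ext n; simp only [Set.mem_setOf_eq, Set.mem_empty_iff_false, iff_false]
      rintro ⟨k, rfl, hk⟩; exact hc k hk
    rw [he, sInf_empty] at h
    exact absurd h (by simp [lt_irrefl])
  set m := Nat.find hne with hm
  have hPm : P m := Nat.find_spec hne
  have hinf : sInf {n : ℕ∞ | ∃ k : ℕ, n = k ∧ P k} = (m : ℕ∞) := by
    apply le_antisymm (enat_sInf_le hPm)
    refine le_sInf ?_
    rintro n ⟨k, rfl, hk⟩
    exact_mod_cast Nat.find_le hk
  refine ⟨m, hPm, hinf, ?_⟩
  rw [hinf] at h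
  exact_mod_cast h

lemma enat_le_sSup {m : ℕ} (h : P m) :
    (m : ℕ∞) ≤ sSup {n : ℕ∞ | ∃ k : ℕ, n = k ∧ P k} := le_sSup ⟨m, rfl, h⟩

lemma enat_sSup_extract {m : ℕ} (h : (m : ℕ∞) ≤ sSup {n : ℕ∞ | ∃ k : ℕ, n = k ∧ P k})
    {m₀ : ℕ} (h₀ : P m₀) : ∃ k, P k ∧ m ≤ k := by
  by_contra hc
  push_neg at hc
  rcases Nat.eq_zero_or_pos m with rfl | hm
  · exact absurd (Nat.zero_le m₀) (not_le.2 (hc m₀ h₀))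
  have hb : sSup {n : ℕ∞ | ∃ k : ℕ, n = k ∧ P k} ≤ ((m - 1 : ℕ) : ℕ∞) := by
    refine sSup_le ?_
    rintro n ⟨k, rfl, hk⟩
    have := hc k hk
    exact_mod_cast Nat.le_sub_one_of_lt this
  have h2 := le_trans h hb
  have h3 : m ≤ m - 1 := by exact_mod_cast h2
  omega

lemma enat_le_of_forall_coe {x y : ℕ∞} (h : ∀ m : ℕ, (m : ℕ∞) ≤ x → (m : ℕ∞) ≤ y) : x ≤ y := by
  cases x with
  | top =>
    have hy : y = ⊤ := by
      by_contra hy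
      lift y to ℕ using hy
      have h1 := h (y + 1) le_top
      have : (y:ℕ) + 1 ≤ y := by exact_mod_cast h1
      omega
    simp [hy]
  | coe m => exact h m le_rfl

end Helpers

namespace ColoredMultigraph

variable {V E : Type} {G : ColoredMultigraph V E}

lemma joins_symm {e : E} {a b : V} (h : G.Joins e a b) : G.Joins e b a := by
  unfold Joins at *; rw [h, Sym2.eq_swap]

lemma joins_of_mem {e : E} {a : V} (h : a ∈ G.ends e) : ∃ b, G.Joins e a b := by
  rcases (Sym2.mem_iff_exists).1 h with ⟨b, hb⟩
  exact ⟨b, hb⟩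

lemma exists_K_edge (hG : G.WellFormed) {v : V} (hv : G.isX v) :
    ∃ e w, G.Joins e v w ∧ G.isK e := by
  rcases hG.1 v hv with ⟨e, hm, hK⟩
  rcases joins_of_mem hm with ⟨w, hw⟩
  exact ⟨e, w, hw, hK⟩

lemma exists_I_edge (hG : G.WellFormed) {v : V} (hv : G.isX v) :
    ∃ e w, G.Joins e v w ∧ ¬ G.isK e := by
  rcases hG.2.1 v hv with ⟨e, hm, hK⟩
  rcases joins_of_mem hm with ⟨w, hw⟩
  exact ⟨e, w, hw, hK⟩

lemma altwalk_last_one {v z : V} {X Y : Bool} {n : ℕ} (h : G.AltWalk v X Y z n)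
    (hY : Y = true) : 1 ≤ n := by
  induction h with
  | single e a b c hj hc => subst hY; simp
  | cons e a b c c' u n hj hc hw ih =>
    have := ih hY
    omega

lemma AltWalk.snoc {v z w : V} {X Y : Bool} {n : ℕ} {e : E}
    (h : G.AltWalk v X Y z n) (hj : G.Joins e z w) (hc : G.isK e ↔ (!Y) = true) :
    G.AltWalk v X (!Y) w (n + cond (!Y) 1 0) := by
  induction h with
  | single e' a b c hj' hc' =>
    exact AltWalk.cons e' a b c (!c) w (cond (!c) 1 0) hj' hc'
      (AltWalk.single e b w (!c) hj hc)
  | cons e' a b c c' u n hj' hc' hw ih =>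
    have h2 := AltWalk.cons e' a b c (!c') w (n + cond (!c') 1 0) hj' hc' (ih hj hc)
    have : cond c 1 0 + (n + cond (!c') 1 0) = cond c 1 0 + n + cond (!c') 1 0 := by omega
    rwa [this] at h2

lemma walkInf_le {v z : V} {X Y : Bool} {m : ℕ} (h : G.AltWalk v X Y z m)
    (hz : ¬ G.isX z) : G.walkInf v X Y ≤ (m : ℕ∞) :=
  enat_sInf_le ⟨z, h, hz⟩

lemma walkInf_attain {v : V} {X Y : Bool} {r : ℕ} (h : G.walkInf v X Y ≤ (r : ℕ∞)) :
    ∃ m, (∃ z, G.AltWalk v X Y z m ∧ ¬ G.isX z) ∧ G.walkInf v X Y = (m : ℕ∞) ∧ m ≤ r :=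
  enat_sInf_attain h

lemma one_le_walkInf {v : V} {X : Bool} : 1 ≤ G.walkInf v X true :=
  enat_one_le_sInf (fun _ hm => by rcases hm with ⟨z, hw, _⟩; exact altwalk_last_one hw rfl)

lemma le_walkSup {v z : V} {X Y : Bool} {m : ℕ} (h : G.AltWalk v X Y z m) :
    (m : ℕ∞) ≤ G.walkSup v X :=
  enat_le_sSup ⟨Y, z, h⟩

lemma walkSup_extract {v : V} {X : Bool} {m : ℕ}
    (h : (m : ℕ∞) ≤ G.walkSup v X) {m₀ : ℕ} {Y₀ : Bool} {z₀ : V}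
    (h₀ : G.AltWalk v X Y₀ z₀ m₀) :
    ∃ k Y z, G.AltWalk v X Y z k ∧ m ≤ k := by
  rcases enat_sSup_extract h (⟨Y₀, z₀, h₀⟩ : ∃ Y z, G.AltWalk v X Y z m₀) with ⟨k, ⟨Y, z, hw⟩, hk⟩
  exact ⟨k, Y, z, hw, hk⟩

lemma single_K_walk {e : E} {v w : V} (hj : G.Joins e v w) (hK : G.isK e) :
    G.AltWalk v true true w 1 := by
  have := AltWalk.single e v w true hj (by simp [hK])
  simpa using this

lemma single_I_walk {e : E} {v w : V} (hj : G.Joins e v w) (hI : ¬ G.isK e) :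
    G.AltWalk v false false w 0 := by
  have := AltWalk.single e v w false hj (by simp [hI])
  simpa using this

lemma cross_inf_K {e : E} {v u : V} {m : ℕ} (he : G.Joins e v u) (hK : G.isK e)
    (h : G.walkInf u false true ≤ (m : ℕ∞)) : G.walkInf v true true ≤ ((1 + m : ℕ) : ℕ∞) := by
  rcases walkInf_attain h with ⟨m', ⟨z, hw, hz⟩, _, hm'⟩
  have h2 := AltWalk.cons e v u true true z m' he (by simp [hK]) (by simpa using hw)
  have h3 : G.walkInf v true true ≤ ((1 + m' : ℕ) : ℕ∞) := by
    have := walkInf_le (G := G) (by simpa using h2) hz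
    simpa using this
  exact le_trans h3 (by exact_mod_cast by omega)

lemma cross_inf_I {e : E} {v u : V} {m : ℕ} (he : G.Joins e v u) (hI : ¬ G.isK e)
    (h : G.walkInf u true true ≤ (m : ℕ∞)) : G.walkInf v false true ≤ (m : ℕ∞) := by
  rcases walkInf_attain h with ⟨m', ⟨z, hw, hz⟩, _, hm'⟩
  have h2 := AltWalk.cons e v u false true z m' he (by simp [hI]) (by simpa using hw)
  have h3 := walkInf_le (G := G) (by simpa using h2) hz
  calc G.walkInf v false true ≤ (m' : ℕ∞) := by simpa using h3
    _ ≤ (m : ℕ∞) := by exact_mod_cast hm'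

lemma cross_sup_K (hG : G.WellFormed) {e : E} {v u : V} {m : ℕ} (he : G.Joins e v u)
    (hK : G.isK e) (hu : G.isX u) (h : (m : ℕ∞) ≤ G.walkSup u false) :
    ((m + 1 : ℕ) : ℕ∞) ≤ G.walkSup v true := by
  rcases exists_I_edge hG hu with ⟨e', w, hw, hI⟩
  rcases walkSup_extract h (single_I_walk hw hI) with ⟨k, Y, z, hwalk, hk⟩
  have h2 := AltWalk.cons e v u true Y z k he (by simp [hK]) (by simpa using hwalk)
  have h3 := le_walkSup (G := G) h2
  calc ((m + 1 : ℕ) : ℕ∞) ≤ ((1 + k : ℕ) : ℕ∞) := by exact_mod_cast by omega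
    _ ≤ G.walkSup v true := by simpa using h3

lemma cross_sup_I (hG : G.WellFormed) {e : E} {v u : V} {m : ℕ} (he : G.Joins e v u)
    (hI : ¬ G.isK e) (hu : G.isX u) (h : (m : ℕ∞) ≤ G.walkSup u true) :
    (m : ℕ∞) ≤ G.walkSup v false := by
  rcases exists_K_edge hG hu with ⟨e', w, hw, hKe⟩
  rcases walkSup_extract h (single_K_walk hw hKe) with ⟨k, Y, z, hwalk, hk⟩
  have h2 := AltWalk.cons e v u false Y z k he (by simp [hI]) (by simpa using hwalk)
  have h3 := le_walkSup (G := G) h2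
  calc (m : ℕ∞) ≤ (k : ℕ∞) := by exact_mod_cast hk
    _ ≤ G.walkSup v false := by simpa using h3

lemma walkInf_le_walkSup {v : V} {X Y : Bool} {m : ℕ} (h : G.walkInf v X Y = (m : ℕ∞)) :
    (m : ℕ∞) ≤ G.walkSup v X := by
  rcases walkInf_attain (le_of_eq h) with ⟨m', ⟨z, hw, hz⟩, heq, hm'⟩
  have : m' = m := by rw [heq] at h; exact_mod_cast h
  subst this
  exact le_walkSup hw

end ColoredMultigraph

namespace ColoredMultigraph

variable {V E : Type} {G : ColoredMultigraph V E}

lemma xstar_nonneg {x : V → ℝ} (hx : G.Feasible x) (w : V) : 0 ≤ x w := hx.1 w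

lemma xstar_le_one (hG : G.WellFormed) {x : V → ℝ} (hx : G.Feasible x) (w : V) : x w ≤ 1 := by
  by_cases hw : G.isX w
  · rcases exists_I_edge hG hw with ⟨e, z, hj, hI⟩
    have h1 := hx.2.2 e w z hj hI
    have h2 := hx.1 z
    linarith
  · rw [hx.2.1 w hw]; norm_num

lemma utility_le {x : V → ℝ} (hx : G.Feasible x) {e : E} {a b : V}
    (hj : G.Joins e a b) (hK : G.isK e) : G.utility x ≤ x a + x b := by
  apply csInf_le
  · exact ⟨0, by rintro r ⟨e', a', b', _, _, rfl⟩; exact add_nonneg (hx.1 a') (hx.1 b')⟩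
  · exact ⟨e, a, b, hj, hK, rfl⟩

lemma utility_nonneg {x : V → ℝ} (hx : G.Feasible x) {e : E} {a b : V}
    (hj : G.Joins e a b) (hK : G.isK e) : 0 ≤ G.utility x := by
  have hne : {r : ℝ | ∃ e a b, G.Joins e a b ∧ G.isK e ∧ r = x a + x b}.Nonempty :=
    ⟨x a + x b, ⟨e, a, b, hj, hK, rfl⟩⟩
  apply le_csInf hne
  rintro r ⟨e', a', b', _, _, rfl⟩
  exact add_nonneg (hx.1 a') (hx.1 b')

lemma walk_ineq {x : V → ℝ} (hx : G.Feasible x) {ω : ℝ}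
    (hω : ∀ e a b, G.Joins e a b → G.isK e → ω ≤ x a + x b)
    {v z : V} {X Y : Bool} {n : ℕ} (h : G.AltWalk v X Y z n) :
    (n : ℝ) * ω - ((n : ℝ) - 1 + (cond X 0 1 : ℝ) + (cond Y 0 1 : ℝ))
      ≤ (cond X 1 (-1) : ℝ) * x v + (cond Y 1 (-1) : ℝ) * x z := by
  induction h with
  | single e a b c hj hc =>
    cases c
    · have hIe : ¬ G.isK e := by simp at hc; exact hc
      have h2 := hx.2.2 e a b hj hIe
      simp only [Bool.cond_false, Bool.cond_true]
      push_cast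
      norm_num
      linarith
    · have hKe : G.isK e := hc.mpr rfl
      have h2 := hω e a b hj hKe
      simp only [Bool.cond_false, Bool.cond_true]
      push_cast
      norm_num
      linarith
  | cons e a b c c' u n hj hc hw ih =>
    cases c
    · have hIe : ¬ G.isK e := by simp at hc; exact hc
      have h2 := hx.2.2 e a b hj hIe
      simp only [Bool.not_false] at ih
      cases c' <;>
      · simp only [Bool.cond_false, Bool.cond_true] at ih ⊢
        push_cast at ih ⊢
        linarith
    · have hKe : G.isK e := hc.mpr rfl
      have h2 := hω e a b hj hKe
      simp only [Bool.not_true] at ih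
      cases c' <;>
      · simp only [Bool.cond_false, Bool.cond_true] at ih ⊢
        push_cast at ih ⊢
        linarith

lemma bound_F1 {x : V → ℝ} (hx : G.Feasible x) {ω : ℝ}
    (hω : ∀ e a b, G.Joins e a b → G.isK e → ω ≤ x a + x b)
    {v z : V} {m : ℕ} (h : G.AltWalk v false true z m) (hz : ¬ G.isX z) :
    x v ≤ (m : ℝ) * (1 - ω) := by
  have h1 := walk_ineq hx hω h
  have h2 := hx.2.1 z hz
  simp only [Bool.cond_false, Bool.cond_true] at h1
  rw [h2] at h1
  nlinarith

lemma bound_F2 {x : V → ℝ} (hx : G.Feasible x) {ω : ℝ}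
    (hω : ∀ e a b, G.Joins e a b → G.isK e → ω ≤ x a + x b)
    {v z : V} {m : ℕ} (h : G.AltWalk v true true z m) (hz : ¬ G.isX z) :
    1 - (m : ℝ) * (1 - ω) ≤ x v := by
  have h1 := walk_ineq hx hω h
  have h2 := hx.2.1 z hz
  simp only [Bool.cond_false, Bool.cond_true] at h1
  rw [h2] at h1
  nlinarith

lemma bound_G1 (hG : G.WellFormed) {x : V → ℝ} (hx : G.Feasible x) {ω : ℝ}
    (hω : ∀ e a b, G.Joins e a b → G.isK e → ω ≤ x a + x b)
    {v z : V} {Y : Bool} {k : ℕ} (h : G.AltWalk v false Y z k) :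
    x v ≤ 1 + (k : ℝ) * (1 - ω) := by
  have h1 := walk_ineq hx hω h
  have h2 := xstar_le_one hG hx z
  have h3 := hx.1 z
  cases Y <;>
  · simp only [Bool.cond_false, Bool.cond_true] at h1
    nlinarith

lemma bound_H2 (hG : G.WellFormed) {x : V → ℝ} (hx : G.Feasible x) {ω : ℝ}
    (hω : ∀ e a b, G.Joins e a b → G.isK e → ω ≤ x a + x b)
    {v : V} (hv : G.isX v) {m : ℕ} (hsup : (m : ℕ∞) ≤ G.walkSup v false)
    (ht : 1 - ω ≤ 0) : x v ≤ 1 + (m : ℝ) * (1 - ω) := by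
  rcases exists_I_edge hG hv with ⟨e, w, hj, hI⟩
  rcases walkSup_extract hsup (single_I_walk hj hI) with ⟨k, Y, z, hw, hk⟩
  have h1 := bound_G1 hG hx hω hw
  have h2 : (k : ℝ) * (1 - ω) ≤ (m : ℝ) * (1 - ω) := by
    apply mul_le_mul_of_nonpos_right _ ht
    exact_mod_cast hk
  linarith

end ColoredMultigraph

section Leaves

lemma frac_mono_num {q a b : ℝ} (hq : 0 ≤ q) (ha : 0 < a) (hab : a ≤ b) :
    a / (a + q) ≤ b / (b + q) := by
  rw [div_le_div_iff₀ (by linarith) (by linarith)]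
  nlinarith

lemma frac_anti_den {a b c : ℝ} (ha : 0 ≤ a) (hb : 0 < b) (hbc : b ≤ c) :
    a / c ≤ a / b :=
  div_le_div_of_nonneg_left ha hb hbc

lemma leaf_conv {R t g : ℝ} (hR0 : 0 < R) (h : (R-1)*(1-t) ≤ g * R) :
    (1 - 1/R) * (1 - t) ≤ g := by
  have e : (1 - 1/R) * (1 - t) = ((R-1)*(1-t))/R := by field_simp
  rw [e, div_le_iff₀ hR0]
  linarith

lemma leafA {R p p' q q' t : ℝ} (hR : 1 ≤ R) (hp : 1 ≤ p) (hp' : 1 ≤ p')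
    (hq0 : 0 ≤ q) (hq'0 : 0 ≤ q') (h1 : q ≤ p' + 1) (h2 : q' ≤ p + 1) (ht : 0 ≤ t)
    (hcase : R - 1 ≤ p + p' ∨ 1 ≤ t * (p + p' + 1)) :
    (1 - 1/R) * (1 - t) ≤ p/(p+q) + p'/(p'+q') := by
  have hR0 : (0:ℝ) < R := by linarith
  apply leaf_conv hR0
  have hS : (0:ℝ) < p + p' + 1 := by linarith
  have g1 : p/(p+p'+1) ≤ p/(p+q) := frac_anti_den (by linarith) (by linarith) (by linarith)
  have g2 : p'/(p+p'+1) ≤ p'/(p'+q') := frac_anti_den (by linarith) (by linarith) (by linarith)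
  have gsum : (p+p')/(p+p'+1) ≤ p/(p+q) + p'/(p'+q') := by
    rw [add_div]; linarith
  have key : (R-1)*(1-t) ≤ ((p+p')/(p+p'+1)) * R := by
    rw [div_mul_eq_mul_div, le_div_iff₀ hS]
    rcases hcase with h | h
    · have k1 : (R-1)*(1-t) ≤ R-1 := by nlinarith [mul_nonneg (by linarith : (0:ℝ) ≤ R-1) ht]
      have k2 : (R-1)*(1-t)*(p+p'+1) ≤ (R-1)*(p+p'+1) :=
        mul_le_mul_of_nonneg_right k1 (by linarith)
      nlinarith
    · have k3 : (1-t)*(p+p'+1) ≤ p+p' := by nlinarith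
      have k4 : (R-1)*((1-t)*(p+p'+1)) ≤ (R-1)*(p+p') :=
        mul_le_mul_of_nonneg_left k3 (by linarith)
      nlinarith
  have mono : ((p+p')/(p+p'+1)) * R ≤ (p/(p+q) + p'/(p'+q')) * R :=
    mul_le_mul_of_nonneg_right gsum (by linarith)
  linarith

lemma leafB {R c q q' t : ℝ} (hR : 1 ≤ R) (hc1 : 1 ≤ c) (hcR : c ≤ R)
    (hq0 : 0 ≤ q) (hq : q ≤ c + 1) (hq'0 : 0 ≤ q') (hq' : q' ≤ R) (ht : 0 ≤ t) :
    (1 - 1/R) * (1 - t) ≤ R/(R+q) + c/(c+q') := by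
  have hR0 : (0:ℝ) < R := by linarith
  apply leaf_conv hR0
  have g1 : R/(R+c+1) ≤ R/(R+q) := frac_anti_den (by linarith) (by linarith) (by linarith)
  have g2 : c/(c+R) ≤ c/(c+q') := frac_anti_den (by linarith) (by linarith) (by linarith)
  have k1 : (R-1)*(1-t) ≤ R-1 := by nlinarith [mul_nonneg (by linarith : (0:ℝ) ≤ R-1) ht]
  have key : R - 1 ≤ (R/(R+c+1) + c/(c+R)) * R := by
    rw [div_add_div _ _ (by linarith : (R+c+1:ℝ) ≠ 0) (by linarith : (c+R:ℝ) ≠ 0),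
      div_mul_eq_mul_div, le_div_iff₀ (by nlinarith : (0:ℝ) < (R+c+1)*(c+R))]
    nlinarith [mul_nonneg (by linarith : (0:ℝ) ≤ R+c) (by linarith : (0:ℝ) ≤ c+1),
      mul_nonneg hR0.le (by linarith : (0:ℝ) ≤ c)]
  have mono : (R/(R+c+1) + c/(c+R)) * R ≤ (R/(R+q) + c/(c+q')) * R :=
    mul_le_mul_of_nonneg_right (by linarith) hR0.le
  linarith

lemma leafD {R p p' q q' t : ℝ} (hR : 1 ≤ R) (hq0 : 0 ≤ q) (hq'0 : 0 ≤ q')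
    (h1 : q' + 1 ≤ p) (h2 : q + 1 ≤ p') (ht : -t * (1 + q + q') ≤ 1) :
    (1 - 1/R) * (1 - t) ≤ p/(p+q) + p'/(p'+q') := by
  have hR0 : (0:ℝ) < R := by linarith
  apply leaf_conv hR0
  have hA : (0:ℝ) < q + q' + 1 := by linarith
  have g1 : (q'+1)/(q'+1+q) ≤ p/(p+q) := frac_mono_num hq0 (by linarith) h1
  have g2 : (q+1)/(q+1+q') ≤ p'/(p'+q') := frac_mono_num hq'0 (by linarith) h2
  have e1 : q'+1+q = q+q'+1 := by ring
  have e2 : q+1+q' = q+q'+1 := by ring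
  rw [e1] at g1; rw [e2] at g2
  have gsum : (q+q'+2)/(q+q'+1) ≤ p/(p+q) + p'/(p'+q') := by
    have e3 : (q+q'+2)/(q+q'+1) = (q'+1)/(q+q'+1) + (q+1)/(q+q'+1) := by
      rw [← add_div]; ring_nf
    rw [e3]; linarith
  have key : (R-1)*(1-t) ≤ ((q+q'+2)/(q+q'+1)) * R := by
    rw [div_mul_eq_mul_div, le_div_iff₀ hA]
    have s1 : (1-t)*(q+q'+1) ≤ q+q'+2 := by nlinarith
    have s2 : (R-1)*((1-t)*(q+q'+1)) ≤ (R-1)*(q+q'+2) :=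
      mul_le_mul_of_nonneg_left s1 (by linarith)
    nlinarith
  have mono : ((q+q'+2)/(q+q'+1)) * R ≤ (p/(p+q) + p'/(p'+q')) * R :=
    mul_le_mul_of_nonneg_right gsum hR0.le
  linarith

lemma leafE {R p' q t : ℝ} (hR : 1 ≤ R) (hq0 : 0 ≤ q) (hqR : q ≤ R)
    (h2 : q + 1 ≤ p') (ht : -t * (1 + q + R) ≤ 1) :
    (1 - 1/R) * (1 - t) ≤ R/(R+q) + p'/(p'+R) := by
  have hR0 : (0:ℝ) < R := by linarith
  apply leaf_conv hR0
  have g2 : (q+1)/(q+1+R) ≤ p'/(p'+R) := frac_mono_num (by linarith) (by linarith) h2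
  have key : (R-1)*(1-t) ≤ (R/(R+q) + (q+1)/(q+1+R)) * R := by
    rw [div_add_div _ _ (by linarith : (R+q:ℝ) ≠ 0) (by linarith : (q+1+R:ℝ) ≠ 0),
      div_mul_eq_mul_div, le_div_iff₀ (by nlinarith : (0:ℝ) < (R+q)*(q+1+R))]
    have s1 : (1-t)*(q+1+R) ≤ q+2+R := by nlinarith
    have u1 : (R+q)*((1-t)*(q+1+R)) ≤ (R+q)*(q+2+R) :=
      mul_le_mul_of_nonneg_left s1 (by linarith)
    have u2 : (R-1)*((R+q)*((1-t)*(q+1+R))) ≤ (R-1)*((R+q)*(q+2+R)) :=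
      mul_le_mul_of_nonneg_left u1 (by linarith)
    have b : (R-1)*((R+q)*(q+2+R)) ≤ (R*(q+1+R) + (R+q)*(q+1))*R := by
      nlinarith [sq_nonneg q, mul_nonneg hR0.le hq0, sq_nonneg (R+q)]
    nlinarith [u2, b]
  have mono : (R/(R+q) + (q+1)/(q+1+R)) * R ≤ (R/(R+q) + p'/(p'+R)) * R :=
    mul_le_mul_of_nonneg_right (by linarith) hR0.le
  linarith

lemma leafF {R q q' t : ℝ} (hR : 1 ≤ R) (hq0 : 0 ≤ q) (hqR : q ≤ R)
    (hq'0 : 0 ≤ q') (hq'R : q' ≤ R) (ht : -t * (1 + 2*R) ≤ 1) :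
    (1 - 1/R) * (1 - t) ≤ R/(R+q) + R/(R+q') := by
  have hR0 : (0:ℝ) < R := by linarith
  apply leaf_conv hR0
  have m1 : (1:ℝ)/2 ≤ R/(R+q) := by
    rw [div_le_div_iff₀ (by norm_num) (by linarith)]; linarith
  have m2 : (1:ℝ)/2 ≤ R/(R+q') := by
    rw [div_le_div_iff₀ (by norm_num) (by linarith)]; linarith
  have key : (R-1)*(1-t) ≤ R := by
    have s1 : (1-t)*(1+2*R) ≤ 2+2*R := by nlinarith
    have s2 : (R-1)*((1-t)*(1+2*R)) ≤ (R-1)*(2+2*R) :=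
      mul_le_mul_of_nonneg_left s1 (by linarith)
    nlinarith [s2]
  have : R ≤ (R/(R+q) + R/(R+q')) * R := by nlinarith [m1, m2]
  linarith

lemma leafZ {R p q t : ℝ} (hR : 1 ≤ R) (hp1 : 1 ≤ p) (hpR : p ≤ R)
    (hq0 : 0 ≤ q) (hq1 : q ≤ 1) (ht : 0 ≤ t)
    (hcase : R ≤ p ∨ 1 ≤ t * (p + 1)) :
    (1 - 1/R) * (1 - t) ≤ p/(p+q) := by
  have hR0 : (0:ℝ) < R := by linarith
  apply leaf_conv hR0
  have g1 : p/(p+1) ≤ p/(p+q) := frac_anti_den (by linarith) (by linarith) (by linarith)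
  have key : (R-1)*(1-t) ≤ (p/(p+1)) * R := by
    rw [div_mul_eq_mul_div, le_div_iff₀ (by linarith : (0:ℝ) < p+1)]
    rcases hcase with h | h
    · have k1 : (R-1)*(1-t) ≤ R-1 := by nlinarith [mul_nonneg (by linarith : (0:ℝ) ≤ R-1) ht]
      have k2 : (R-1)*(1-t)*(p+1) ≤ (R-1)*(p+1) :=
        mul_le_mul_of_nonneg_right k1 (by linarith)
      nlinarith
    · have k3 : (1-t)*(p+1) ≤ p := by nlinarith
      have k4 : (R-1)*((1-t)*(p+1)) ≤ (R-1)*p :=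
        mul_le_mul_of_nonneg_left k3 (by linarith)
      nlinarith
  have mono : (p/(p+1)) * R ≤ (p/(p+q)) * R := mul_le_mul_of_nonneg_right g1 hR0.le
  linarith

lemma leafI {p p' q q' : ℝ} (hp : 1 ≤ p) (hp' : 1 ≤ p') (hq0 : 0 ≤ q) (hq'0 : 0 ≤ q')
    (h : p * p' ≤ q * q') : p/(p+q) + p'/(p'+q') ≤ 1 := by
  rw [div_add_div _ _ (by linarith : (p+q:ℝ) ≠ 0) (by linarith : (p'+q':ℝ) ≠ 0),
    div_le_one (by nlinarith : (0:ℝ) < (p+q)*(p'+q'))]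
  nlinarith

end Leaves

namespace ColoredMultigraph

variable {V E : Type} {G : ColoredMultigraph V E}

lemma enat_le_pred_of_lt {x : ℕ∞} {n : ℕ} (h : x < (n : ℕ∞)) : x ≤ ((n - 1 : ℕ) : ℕ∞) := by
  have hx : x ≠ ⊤ := by
    intro h'; rw [h'] at h; exact absurd h (by simp)
  lift x to ℕ using hx
  have : x < n := by exact_mod_cast h
  exact_mod_cast Nat.le_sub_one_of_lt this

lemma pv_le_coe {R : ℕ} {v : V} : G.pv R v ≤ (R : ℕ∞) := by
  unfold pv bnd Bnd
  split_ifs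
  · exact min_le_right _ _
  · exact le_trans (min_le_left _ _) (min_le_right _ _)

lemma qv_le_coe {R : ℕ} {v : V} : G.qv R v ≤ (R : ℕ∞) := by
  unfold qv bnd Bnd
  split_ifs
  · exact min_le_right _ _
  · exact le_trans (min_le_left _ _) (min_le_right _ _)

lemma pv_le_bnd {R : ℕ} {v : V} : G.pv R v ≤ G.bnd R v false true := by
  unfold pv; split_ifs
  · exact le_rfl
  · exact min_le_left _ _

lemma qv_le_bnd {R : ℕ} {v : V} : G.qv R v ≤ G.bnd R v true true := by
  unfold qv; split_ifs
  · exact le_rfl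
  · exact min_le_left _ _

lemma one_le_pv (hG : G.WellFormed) {R : ℕ} (hR : 1 ≤ R) {v : V} (hv : G.isX v) :
    1 ≤ G.pv R v := by
  have h1 : (1 : ℕ∞) ≤ G.bnd R v false true :=
    le_min one_le_walkInf (by exact_mod_cast hR)
  have h2 : (1 : ℕ∞) ≤ G.Bnd R v true := by
    rcases exists_K_edge hG hv with ⟨e, w, hw, hK⟩
    have := le_walkSup (G := G) (single_K_walk hw hK)
    exact le_min (by exact_mod_cast this) (by exact_mod_cast hR)
  unfold pv; split_ifs
  · exact h1
  · exact le_min h1 h2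

/-- extract the natural number value of `pv`. -/
lemma pv_toNat {R : ℕ} {v : V} :
    G.pv R v = ((G.pv R v).toNat : ℕ∞) ∧ (G.pv R v).toNat ≤ R := by
  have h := pv_le_coe (G := G) (R := R) (v := v)
  have hne : G.pv R v ≠ ⊤ := by
    intro h'; rw [h'] at h; exact absurd h (by simp)
  refine ⟨(ENat.coe_toNat hne).symm, ?_⟩
  rw [(ENat.coe_toNat hne).symm] at h
  exact_mod_cast h

lemma qv_toNat {R : ℕ} {v : V} :
    G.qv R v = ((G.qv R v).toNat : ℕ∞) ∧ (G.qv R v).toNat ≤ R := by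
  have h := qv_le_coe (G := G) (R := R) (v := v)
  have hne : G.qv R v ≠ ⊤ := by
    intro h'; rw [h'] at h; exact absurd h (by simp)
  refine ⟨(ENat.coe_toNat hne).symm, ?_⟩
  rw [(ENat.coe_toNat hne).symm] at h
  exact_mod_cast h

lemma xval_eq {R : ℕ} {v : V} (hv : G.isX v) :
    G.xval R v = ((G.pv R v).toNat : ℝ) / (((G.pv R v).toNat : ℝ) + ((G.qv R v).toNat : ℝ)) := by
  unfold xval; rw [if_pos hv]

lemma xval_eq_zero {R : ℕ} {v : V} (hv : ¬ G.isX v) : G.xval R v = 0 := by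
  unfold xval; rw [if_neg hv]

end ColoredMultigraph

namespace ColoredMultigraph

variable {V E : Type} {G : ColoredMultigraph V E}

lemma walk_of_inf_eq {v : V} {X Y : Bool} {m : ℕ} (h : G.walkInf v X Y = (m : ℕ∞)) :
    ∃ z, G.AltWalk v X Y z m ∧ ¬ G.isX z := by
  obtain ⟨m', hw, heq, hle⟩ := walkInf_attain (le_of_eq h)
  have hm : m' = m := by rw [heq] at h; exact_mod_cast h
  subst hm
  exact hw

lemma utility_le_all {xstar : V → ℝ} (hx : G.Feasible xstar) :
    ∀ e a b, G.Joins e a b → G.isK e → G.utility xstar ≤ xstar a + xstar b :=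
  fun _ _ _ hj hK => utility_le hx hj hK

/-- The bound for a K-edge from an x-vertex to a 0-vertex. -/
lemma zero_bound (hG : G.WellFormed) {R : ℕ} (hR : 1 ≤ R) {v z : V} (hv : G.isX v)
    (hz : ¬ G.isX z) {e : E} (he : G.Joins e v z) (heK : G.isK e) {xstar : V → ℝ}
    (hx : G.Feasible xstar) :
    (1 - 1/(R:ℝ)) * G.utility xstar ≤ G.xval R v := by
  set ω := G.utility xstar with hωdef
  have hω := utility_le_all hx
  obtain ⟨hPeq, hPle⟩ := pv_toNat (G := G) (R := R) (v := v)
  obtain ⟨hQeq, hQle⟩ := qv_toNat (G := G) (R := R) (v := v)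
  set P := (G.pv R v).toNat
  set Q := (G.qv R v).toNat
  have hP1 : 1 ≤ P := by
    have h := one_le_pv hG hR hv; rw [hPeq] at h; exact_mod_cast h
  -- a2 = 1
  have ha2le : G.walkInf v true true ≤ (1 : ℕ∞) := by
    have := walkInf_le (G := G) (single_K_walk he heK) hz
    exact_mod_cast this
  have ha2eq : G.walkInf v true true = ((1:ℕ) : ℕ∞) :=
    le_antisymm (by exact_mod_cast ha2le) (by exact_mod_cast one_le_walkInf (G := G))
  obtain ⟨z2, hw2, hz2⟩ := walk_of_inf_eq ha2eq
  have hslow : 1 - (1:ℝ)*(1-ω) ≤ xstar v := by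
    have := bound_F2 hx hω hw2 hz2; exact_mod_cast this
  have hs1 : xstar v ≤ 1 := xstar_le_one hG hx v
  have ht0 : 0 ≤ 1 - ω := by nlinarith
  -- Q ≤ 1
  have hQ1 : Q ≤ 1 := by
    have h1 : G.qv R v ≤ ((1:ℕ) : ℕ∞) := by
      refine le_trans qv_le_bnd ?_
      show min (G.walkInf v true true) _ ≤ _
      rw [ha2eq]; exact min_le_left _ _
    rw [hQeq] at h1; exact_mod_cast h1
  -- pv branch
  have hKv : G.walkInf v true true ≤ (R : ℕ∞) := by
    rw [ha2eq]; exact_mod_cast hR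
  have hpveq : G.pv R v = G.bnd R v false true := by unfold pv; rw [if_pos hKv]
  rw [xval_eq hv, show ω = 1 - (1 - ω) from by ring]
  by_cases hPR : P = R
  · refine leafZ (by exact_mod_cast hR) (by exact_mod_cast hP1) (by exact_mod_cast hPle)
      (by positivity) (by exact_mod_cast hQ1) ht0 (Or.inl ?_)
    exact_mod_cast hPR.ge
  · -- P < R, so a₁ = P and xstar v ≤ P (1-ω)
    have hPltR : P < R := lt_of_le_of_ne hPle hPR
    have ha1v : G.walkInf v false true = (P : ℕ∞) := by
      by_cases hle : G.walkInf v false true ≤ (R : ℕ∞)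
      · obtain ⟨m1, ⟨z1, hw1, hz1⟩, heq1, hm1R⟩ := walkInf_attain hle
        have hmin : G.pv R v = ((min m1 R : ℕ) : ℕ∞) := by
          rw [hpveq]; show min (G.walkInf v false true) _ = _
          rw [heq1]; norm_cast
        have hPm : P = min m1 R := by
          have := hPeq.symm.trans hmin; exact_mod_cast this
        rcases le_total m1 R with h' | h'
        · rw [heq1]; congr 1; omega
        · exfalso; omega
      · exfalso
        have : G.pv R v = (R : ℕ∞) := by
          rw [hpveq]; show min (G.walkInf v false true) _ = _
          exact min_eq_right (le_of_lt (not_le.1 hle))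
        have : P = R := by have := hPeq.symm.trans this; exact_mod_cast this
        omega
    obtain ⟨z1, hw1, hz1⟩ := walk_of_inf_eq ha1v
    have hsub : xstar v ≤ (P:ℝ)*(1-ω) := bound_F1 hx hω hw1 hz1
    refine leafZ (by exact_mod_cast hR) (by exact_mod_cast hP1) (by exact_mod_cast hPle)
      (by positivity) (by exact_mod_cast hQ1) ht0 (Or.inr ?_)
    nlinarith

end ColoredMultigraph

namespace ColoredMultigraph

variable {V E : Type} {G : ColoredMultigraph V E}

lemma case1_bound (hG : G.WellFormed) {R : ℕ} (hR : 1 ≤ R) {v u : V} (hv : G.isX v)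
    (hu : G.isX u) {e : E} (he : G.Joins e v u) (heK : G.isK e) {xstar : V → ℝ}
    (hx : G.Feasible xstar)
    (hKv : G.walkInf v true true ≤ (R : ℕ∞)) (hKu : G.walkInf u true true ≤ (R : ℕ∞)) :
    (1 - 1/(R:ℝ)) * G.utility xstar ≤ G.xval R v + G.xval R u := by
  set ω := G.utility xstar with hωdef
  have hω := utility_le_all hx
  obtain ⟨hPeq, hPle⟩ := pv_toNat (G := G) (R := R) (v := v)
  obtain ⟨hQeq, hQle⟩ := qv_toNat (G := G) (R := R) (v := v)
  obtain ⟨hP'eq, hP'le⟩ := pv_toNat (G := G) (R := R) (v := u)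
  obtain ⟨hQ'eq, hQ'le⟩ := qv_toNat (G := G) (R := R) (v := u)
  set P := (G.pv R v).toNat; set Q := (G.qv R v).toNat
  set P' := (G.pv R u).toNat; set Q' := (G.qv R u).toNat
  have hP1 : 1 ≤ P := by
    have h := one_le_pv hG hR hv; rw [hPeq] at h; exact_mod_cast h
  have hP'1 : 1 ≤ P' := by
    have h := one_le_pv hG hR hu; rw [hP'eq] at h; exact_mod_cast h
  obtain ⟨m2, ⟨z2, hw2, hz2⟩, ha2, hm2R⟩ := walkInf_attain hKv
  obtain ⟨m2', ⟨z2', hw2', hz2'⟩, ha2', hm2R'⟩ := walkInf_attain hKu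
  have hm21 : 1 ≤ m2 := by
    have h := one_le_walkInf (G := G) (v := v) (X := true); rw [ha2] at h; exact_mod_cast h
  have hslow : 1 - (m2:ℝ)*(1-ω) ≤ xstar v := bound_F2 hx hω hw2 hz2
  have hs1 : xstar v ≤ 1 := xstar_le_one hG hx v
  have ht0 : 0 ≤ 1 - ω := by nlinarith [(by exact_mod_cast hm21 : (1:ℝ) ≤ (m2:ℝ))]
  -- Q ≤ m2, Q' ≤ m2'
  have hQm2 : Q ≤ m2 := by
    have h1 : G.qv R v ≤ (m2 : ℕ∞) := by
      refine le_trans qv_le_bnd ?_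
      show min (G.walkInf v true true) _ ≤ _
      rw [ha2]; exact min_le_left _ _
    rw [hQeq] at h1; exact_mod_cast h1
  have hQ'm2' : Q' ≤ m2' := by
    have h1 : G.qv R u ≤ (m2' : ℕ∞) := by
      refine le_trans qv_le_bnd ?_
      show min (G.walkInf u true true) _ ≤ _
      rw [ha2']; exact min_le_left _ _
    rw [hQ'eq] at h1; exact_mod_cast h1
  -- pv on branch 1 at both vertices
  have hpveq : G.pv R v = G.bnd R v false true := by unfold pv; rw [if_pos hKv]
  have hpueq : G.pv R u = G.bnd R u false true := by unfold pv; rw [if_pos hKu]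
  -- cross fact: m2 ≤ P' + 1  (and in the sub-case P' < R, the value P' is a1(u))
  have hcross : ∀ w w' : V, ∀ hw : G.isX w, G.Joins e w w' →
      G.pv R w' = G.bnd R w' false true →
      ∀ m : ℕ, G.walkInf w true true = (m : ℕ∞) → m ≤ R → m ≤ (G.pv R w').toNat + 1 := by
    intro w w' hxw hj hpw' m hminf hmR
    by_cases ha1 : G.walkInf w' false true ≤ (R : ℕ∞)
    · obtain ⟨m1, ⟨z1, hw1, hz1⟩, heq1, hm1R⟩ := walkInf_attain ha1
      have hc := cross_inf_K hj heK (le_of_eq heq1)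
      rw [hminf] at hc
      have hm : m ≤ 1 + m1 := by exact_mod_cast hc
      have hpw : G.pv R w' = ((min m1 R : ℕ) : ℕ∞) := by
        rw [hpw']; show min (G.walkInf w' false true) _ = _
        rw [heq1]; norm_cast
      have : (G.pv R w').toNat = min m1 R := by rw [hpw]; simp
      omega
    · have hpw : G.pv R w' = (R : ℕ∞) := by
        rw [hpw']; show min (G.walkInf w' false true) _ = _
        exact min_eq_right (le_of_lt (not_le.1 ha1))
      have : (G.pv R w').toNat = R := by rw [hpw]; simp
      omega
  have hm2P' : m2 ≤ P' + 1 := hcross v u hv he hpueq m2 ha2 hm2R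
  have hm2'P : m2' ≤ P + 1 := hcross u v hu (joins_symm he) hpveq m2' ha2' hm2R'
  have hQP' : Q ≤ P' + 1 := le_trans hQm2 hm2P'
  have hQ'P : Q' ≤ P + 1 := le_trans hQ'm2' hm2'P
  rw [xval_eq hv, xval_eq hu, show ω = 1 - (1 - ω) from by ring]
  by_cases hS : R ≤ P + P' + 1
  · refine leafA (by exact_mod_cast hR) (by exact_mod_cast hP1) (by exact_mod_cast hP'1)
      (by positivity) (by positivity) (by exact_mod_cast hQP') (by exact_mod_cast hQ'P)
      ht0 (Or.inl ?_)
    have : (R:ℝ) ≤ (P:ℝ) + (P':ℝ) + 1 := by exact_mod_cast hS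
    linarith
  · have hPltR : P < R := by omega
    have ha1v : G.walkInf v false true = (P : ℕ∞) := by
      by_cases hle : G.walkInf v false true ≤ (R : ℕ∞)
      · obtain ⟨m1, ⟨z1, hw1, hz1⟩, heq1, hm1R⟩ := walkInf_attain hle
        have hmin : G.pv R v = ((min m1 R : ℕ) : ℕ∞) := by
          rw [hpveq]; show min (G.walkInf v false true) _ = _
          rw [heq1]; norm_cast
        have hPm : P = min m1 R := by
          have := hPeq.symm.trans hmin; exact_mod_cast this
        rcases le_total m1 R with h' | h'
        · rw [heq1]; congr 1; omega
        · exfalso; omega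
      · exfalso
        have h2 : G.pv R v = (R : ℕ∞) := by
          rw [hpveq]; show min (G.walkInf v false true) _ = _
          exact min_eq_right (le_of_lt (not_le.1 hle))
        have : P = R := by have := hPeq.symm.trans h2; exact_mod_cast this
        omega
    obtain ⟨z1, hw1, hz1⟩ := walk_of_inf_eq ha1v
    have hsub : xstar v ≤ (P:ℝ)*(1-ω) := bound_F1 hx hω hw1 hz1
    refine leafA (by exact_mod_cast hR) (by exact_mod_cast hP1) (by exact_mod_cast hP'1)
      (by positivity) (by positivity) (by exact_mod_cast hQP') (by exact_mod_cast hQ'P)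
      ht0 (Or.inr ?_)
    have hm2P'r : (m2:ℝ) ≤ (P':ℝ) + 1 := by exact_mod_cast hm2P'
    nlinarith [mul_le_mul_of_nonneg_right hm2P'r ht0]

end ColoredMultigraph

namespace ColoredMultigraph

variable {V E : Type} {G : ColoredMultigraph V E}

lemma min_coe_eq {x : ℕ∞} {R n : ℕ} (h : min x (R:ℕ∞) = (n:ℕ∞)) (hn : n < R) : x = (n:ℕ∞) := by
  rcases le_total x (R:ℕ∞) with h' | h'
  · rwa [min_eq_left h'] at h
  · rw [min_eq_right h'] at h
    exfalso
    have : R = n := by exact_mod_cast h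
    omega

lemma case2_bound (hG : G.WellFormed) {R : ℕ} (hR : 1 ≤ R) {v u : V} (hv : G.isX v)
    (hu : G.isX u) {e : E} (he : G.Joins e v u) (heK : G.isK e) {xstar : V → ℝ}
    (hx : G.Feasible xstar)
    (hKv : G.walkInf v true true ≤ (R : ℕ∞)) (hKu : ¬ G.walkInf u true true ≤ (R : ℕ∞)) :
    (1 - 1/(R:ℝ)) * G.utility xstar ≤ G.xval R v + G.xval R u := by
  set ω := G.utility xstar with hωdef
  have hω := utility_le_all hx
  obtain ⟨hPeq, hPle⟩ := pv_toNat (G := G) (R := R) (v := v)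
  obtain ⟨hQeq, hQle⟩ := qv_toNat (G := G) (R := R) (v := v)
  obtain ⟨hP'eq, hP'le⟩ := pv_toNat (G := G) (R := R) (v := u)
  obtain ⟨hQ'eq, hQ'le⟩ := qv_toNat (G := G) (R := R) (v := u)
  set P := (G.pv R v).toNat; set Q := (G.qv R v).toNat
  set P' := (G.pv R u).toNat; set Q' := (G.qv R u).toNat
  have hP'1 : 1 ≤ P' := by
    have h := one_le_pv hG hR hu; rw [hP'eq] at h; exact_mod_cast h
  obtain ⟨m2, ⟨z2, hw2, hz2⟩, ha2, hm2R⟩ := walkInf_attain hKv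
  have hm21 : 1 ≤ m2 := by
    have h := one_le_walkInf (G := G) (v := v) (X := true); rw [ha2] at h; exact_mod_cast h
  have hslow : 1 - (m2:ℝ)*(1-ω) ≤ xstar v := bound_F2 hx hω hw2 hz2
  have hs1 : xstar v ≤ 1 := xstar_le_one hG hx v
  have ht0 : 0 ≤ 1 - ω := by nlinarith [(by exact_mod_cast hm21 : (1:ℝ) ≤ (m2:ℝ))]
  have hQm2 : Q ≤ m2 := by
    have h1 : G.qv R v ≤ (m2 : ℕ∞) := by
      refine le_trans qv_le_bnd ?_
      show min (G.walkInf v true true) _ ≤ _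
      rw [ha2]; exact min_le_left _ _
    rw [hQeq] at h1; exact_mod_cast h1
  -- R ≤ a1(v), hence P = R
  have ha1Rv : (R : ℕ∞) ≤ G.walkInf v false true := by
    by_contra hlt
    obtain ⟨m1, ⟨z1, hw1, hz1⟩, heq1, hm1R⟩ := walkInf_attain (le_of_lt (not_le.1 hlt))
    have hm1lt : m1 < R := by
      have := not_le.1 hlt; rw [heq1] at this; exact_mod_cast this
    have hc := cross_inf_K (joins_symm he) heK (le_of_eq heq1)
    exact hKu (le_trans hc (by exact_mod_cast by omega))
  have hpveq : G.pv R v = (R : ℕ∞) := by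
    unfold pv; rw [if_pos hKv]
    show min (G.walkInf v false true) _ = _
    exact min_eq_right ha1Rv
  have hPR : P = R := by have := hPeq.symm.trans hpveq; exact_mod_cast this
  have hPRr : (P:ℝ) = (R:ℝ) := by exact_mod_cast hPR
  have hpueq : G.pv R u = min (G.bnd R u false true) (G.Bnd R u true) := by
    unfold pv; rw [if_neg hKu]
  rw [xval_eq hv, xval_eq hu, show ω = 1 - (1 - ω) from by ring, hPRr]
  by_cases hpuR : P' = R
  · -- both p-values are R
    have hP'Rr : (P':ℝ) = (R:ℝ) := by exact_mod_cast hpuR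
    rw [hP'Rr]
    refine leafF (by exact_mod_cast hR) (by positivity) (by exact_mod_cast hQle)
      (by positivity) (by exact_mod_cast hQ'le) ?_
    have h1 : (0:ℝ) < 1 + 2*(R:ℝ) := by positivity
    nlinarith
  · have hP'lt : P' < R := lt_of_le_of_ne hP'le hpuR
    have hQc : Q ≤ P' + 1 := by
      rcases le_total (G.walkInf u false true) (G.walkSup u true) with hcmp | hcmp
      · -- p_u = a1(u)
        have hpu2 : G.pv R u = min (G.walkInf u false true) (R:ℕ∞) := by
          rw [hpueq]
          exact min_eq_left (min_le_min hcmp le_rfl)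
        have ha1u : G.walkInf u false true = (P' : ℕ∞) :=
          min_coe_eq (hpu2.symm.trans hP'eq) hP'lt
        have hc := cross_inf_K he heK (le_of_eq ha1u)
        rw [ha2] at hc
        have : m2 ≤ 1 + P' := by exact_mod_cast hc
        omega
      · -- p_u = A2(u) < a1(u) ∧ < R
        have hpu2 : G.pv R u = min (G.walkSup u true) (R:ℕ∞) := by
          rw [hpueq]
          exact min_eq_right (min_le_min hcmp le_rfl)
        have hA2u : G.walkSup u true = (P' : ℕ∞) :=
          min_coe_eq (hpu2.symm.trans hP'eq) hP'lt
        -- A1(v) ≤ P' - 1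
        have hA1v : G.walkSup v false < (P' : ℕ∞) := by
          by_contra hge
          have := cross_sup_K hG (joins_symm he) heK hv (not_lt.1 hge)
          rw [hA2u] at this
          have : P' + 1 ≤ P' := by exact_mod_cast this
          omega
        have hA1le : G.walkSup v false ≤ ((P' - 1 : ℕ) : ℕ∞) := enat_le_pred_of_lt hA1v
        -- a1(v) is not ≤ R
        have ha1top : ¬ (G.walkInf v false true ≤ (R : ℕ∞)) := by
          intro hle
          obtain ⟨m1, ⟨z1, hw1, hz1⟩, heq1, hm1R⟩ := walkInf_attain hle
          have h1 : (m1 : ℕ∞) ≤ ((P' - 1 : ℕ) : ℕ∞) := le_trans (walkInf_le_walkSup heq1) hA1le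
          have h2 : m1 ≤ P' - 1 := by exact_mod_cast h1
          have h3 : (R : ℕ∞) ≤ (m1 : ℕ∞) := by rw [← heq1]; exact ha1Rv
          have h4 : R ≤ m1 := by exact_mod_cast h3
          omega
        have hqv2 : G.qv R v ≤ ((P' - 1 : ℕ) : ℕ∞) := by
          unfold qv; rw [if_neg ha1top]
          exact le_trans (min_le_right _ _) (le_trans (min_le_left _ _) hA1le)
        have : Q ≤ P' - 1 := by rw [hQeq] at hqv2; exact_mod_cast hqv2
        omega
    exact leafB (by exact_mod_cast hR) (by exact_mod_cast hP'1) (by exact_mod_cast hP'le)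
      (by positivity) (by exact_mod_cast hQc) (by positivity) (by exact_mod_cast hQ'le) ht0

end ColoredMultigraph

namespace ColoredMultigraph

variable {V E : Type} {G : ColoredMultigraph V E}

lemma case3_bound (hG : G.WellFormed) {R : ℕ} (hR : 1 ≤ R) {v u : V} (hv : G.isX v)
    (hu : G.isX u) {e : E} (he : G.Joins e v u) (heK : G.isK e) {xstar : V → ℝ}
    (hx : G.Feasible xstar)
    (hKv : ¬ G.walkInf v true true ≤ (R : ℕ∞)) (hKu : ¬ G.walkInf u true true ≤ (R : ℕ∞)) :
    (1 - 1/(R:ℝ)) * G.utility xstar ≤ G.xval R v + G.xval R u := by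
  set ω := G.utility xstar with hωdef
  have hω := utility_le_all hx
  obtain ⟨hPeq, hPle⟩ := pv_toNat (G := G) (R := R) (v := v)
  obtain ⟨hQeq, hQle⟩ := qv_toNat (G := G) (R := R) (v := v)
  obtain ⟨hP'eq, hP'le⟩ := pv_toNat (G := G) (R := R) (v := u)
  obtain ⟨hQ'eq, hQ'le⟩ := qv_toNat (G := G) (R := R) (v := u)
  set P := (G.pv R v).toNat; set Q := (G.qv R v).toNat
  set P' := (G.pv R u).toNat; set Q' := (G.qv R u).toNat
  -- R ≤ a1 on both sides
  have ha1R : ∀ w w' : V, G.Joins e w' w → ¬ G.walkInf w' true true ≤ (R : ℕ∞) →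
      (R : ℕ∞) ≤ G.walkInf w false true := by
    intro w w' hj hK'
    by_contra hlt
    obtain ⟨m1, ⟨z1, hw1, hz1⟩, heq1, hm1R⟩ := walkInf_attain (le_of_lt (not_le.1 hlt))
    have hm1lt : m1 < R := by
      have := not_le.1 hlt; rw [heq1] at this; exact_mod_cast this
    have hc := cross_inf_K hj heK (le_of_eq heq1)
    exact hK' (le_trans hc (by exact_mod_cast by omega))
  have ha1Rv : (R : ℕ∞) ≤ G.walkInf v false true := ha1R v u (joins_symm he) hKu
  have ha1Ru : (R : ℕ∞) ≤ G.walkInf u false true := ha1R u v he hKv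
  -- Q ≤ A1 (as ℕ∞) at both vertices
  have hQA1 : ∀ w : V, (R : ℕ∞) ≤ G.walkInf w false true →
      ((G.qv R w).toNat : ℕ∞) ≤ G.walkSup w false := by
    intro w haR
    by_cases hb : G.walkInf w false true ≤ (R : ℕ∞)
    · obtain ⟨m1, ⟨z1, hw1, hz1⟩, heq1, hm1R⟩ := walkInf_attain hb
      have hm1 : m1 = R := by
        have := le_trans haR (le_of_eq heq1)
        have h2 : R ≤ m1 := by exact_mod_cast this
        omega
      have hsup : ((R:ℕ) : ℕ∞) ≤ G.walkSup w false := by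
        rw [← hm1]; exact walkInf_le_walkSup heq1
      refine le_trans ?_ hsup
      have := (qv_toNat (G := G) (R := R) (v := w)).2
      exact_mod_cast this
    · have h1 : G.qv R w ≤ G.walkSup w false := by
        unfold qv; rw [if_neg hb]
        exact le_trans (min_le_right _ _) (min_le_left _ _)
      rw [(qv_toNat (G := G) (R := R) (v := w)).1] at h1
      exact h1
  have hQA1v := hQA1 v ha1Rv
  have hQA1u := hQA1 u ha1Ru
  -- lower bounds on p from the partner's q
  have hplb : ∀ w w' : V, G.Joins e w w' → G.isX w' → ¬ G.walkInf w true true ≤ (R : ℕ∞) →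
      (R : ℕ∞) ≤ G.walkInf w false true →
      ((G.qv R w').toNat : ℕ∞) ≤ G.walkSup w' false →
      min ((G.qv R w').toNat + 1) R ≤ (G.pv R w).toNat := by
    intro w w' hj hxw' hKw haR hqa
    have hA2 : (((G.qv R w').toNat + 1 : ℕ) : ℕ∞) ≤ G.walkSup w true :=
      cross_sup_K hG hj heK hxw' hqa
    have h1 : ((min ((G.qv R w').toNat + 1) R : ℕ) : ℕ∞) ≤ G.pv R w := by
      unfold pv; rw [if_neg hKw]
      refine le_min (le_min ?_ ?_) (le_min ?_ ?_)
      · exact le_trans (le_trans (by exact_mod_cast Nat.min_le_right _ _) haR) le_rfl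
      · exact_mod_cast Nat.min_le_right _ _
      · exact le_trans (by exact_mod_cast Nat.min_le_left _ _) hA2
      · exact_mod_cast Nat.min_le_right _ _
    rw [(pv_toNat (G := G) (R := R) (v := w)).1] at h1
    exact_mod_cast h1
  have hPlb : min (Q' + 1) R ≤ P := hplb v u he hu hKv ha1Rv hQA1u
  have hP'lb : min (Q + 1) R ≤ P' := hplb u v (joins_symm he) hv hKu ha1Ru hQA1v
  -- analytic bound
  have hτ : -(1-ω) * (1 + (Q:ℝ) + (Q':ℝ)) ≤ 1 := by
    rcases le_or_gt 0 (1 - ω) with h' | h'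
    · have : (0:ℝ) < 1 + (Q:ℝ) + (Q':ℝ) := by positivity
      nlinarith
    · have hsv : xstar v ≤ 1 + (Q:ℝ)*(1-ω) := bound_H2 hG hx hω hv hQA1v (le_of_lt h')
      have hsu : xstar u ≤ 1 + (Q':ℝ)*(1-ω) := bound_H2 hG hx hω hu hQA1u (le_of_lt h')
      have hst : ω ≤ xstar v + xstar u := hω e v u he heK
      nlinarith
  rw [xval_eq hv, xval_eq hu, show ω = 1 - (1 - ω) from by ring]
  by_cases hQR : Q = R <;> by_cases hQ'R : Q' = R
  · -- Q = Q' = R : P = P' = R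
    have hPR : P = R := by omega
    have hP'R : P' = R := by omega
    have e1 : (P:ℝ) = (R:ℝ) := by exact_mod_cast hPR
    have e2 : (P':ℝ) = (R:ℝ) := by exact_mod_cast hP'R
    have e3 : (Q:ℝ) = (R:ℝ) := by exact_mod_cast hQR
    have e4 : (Q':ℝ) = (R:ℝ) := by exact_mod_cast hQ'R
    rw [e1, e2, e3, e4]
    refine leafF (by exact_mod_cast hR) (by positivity) le_rfl (by positivity) le_rfl ?_
    rw [e3, e4] at hτ
    linarith
  ·
    -- Q = R: min (Q+1) R = R ≤ P' so P' = R; and Q'+1 ≤ R so min (Q'+1) R = Q'+1 ≤ P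
    have hP'R : P' = R := by omega
    have hPge : Q' + 1 ≤ P := by omega
    have e2 : (P':ℝ) = (R:ℝ) := by exact_mod_cast hP'R
    have e3 : (Q:ℝ) = (R:ℝ) := by exact_mod_cast hQR
    rw [e2, e3, add_comm]
    refine leafE (by exact_mod_cast hR) (by positivity) (by exact_mod_cast hQ'le)
      (by exact_mod_cast hPge) ?_
    rw [e3] at hτ
    linarith
  · -- Q < R, Q' = R : P = R
    have hPR : P = R := by omega
    have hP'ge : Q + 1 ≤ P' := by omega
    have e1 : (P:ℝ) = (R:ℝ) := by exact_mod_cast hPR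
    have e4 : (Q':ℝ) = (R:ℝ) := by exact_mod_cast hQ'R
    rw [e1, e4]
    refine leafE (by exact_mod_cast hR) (by positivity) (by exact_mod_cast hQle)
      (by exact_mod_cast hP'ge) ?_
    rw [e4] at hτ
    linarith
  · -- Q < R, Q' < R
    have hPge : Q' + 1 ≤ P := by omega
    have hP'ge : Q + 1 ≤ P' := by omega
    refine leafD (by exact_mod_cast hR) (by positivity) (by positivity)
      (by exact_mod_cast hPge) (by exact_mod_cast hP'ge) ?_
    linarith
end ColoredMultigraph

namespace ColoredMultigraph

variable {V E : Type} {G : ColoredMultigraph V E}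

lemma pair_bound (hG : G.WellFormed) {R : ℕ} (hR : 1 ≤ R) {v u : V} (hv : G.isX v)
    (hu : G.isX u) {e : E} (he : G.Joins e v u) (heK : G.isK e) {xstar : V → ℝ}
    (hx : G.Feasible xstar) :
    (1 - 1/(R:ℝ)) * G.utility xstar ≤ G.xval R v + G.xval R u := by
  by_cases h1 : G.walkInf v true true ≤ (R : ℕ∞) <;>
    by_cases h2 : G.walkInf u true true ≤ (R : ℕ∞)
  · exact case1_bound hG hR hv hu he heK hx h1 h2
  · exact case2_bound hG hR hv hu he heK hx h1 h2
  · rw [add_comm]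
    exact case2_bound hG hR hu hv (joins_symm he) heK hx h2 h1
  · exact case3_bound hG hR hv hu he heK hx h1 h2

lemma pv_le_qv_I (hG : G.WellFormed) {R : ℕ} {e : E} {a b : V} (he : G.Joins e a b)
    (hI : ¬ G.isK e) (ha : G.isX a) : G.pv R a ≤ G.qv R b := by
  have h_a1_a2 : G.walkInf a false true ≤ G.walkInf b true true := by
    cases hbc : G.walkInf b true true with
    | top => exact le_top
    | coe m => exact cross_inf_I he hI (le_of_eq hbc)
  have hp1 : G.pv R a ≤ min (G.walkInf b true true) (R : ℕ∞) :=
    le_trans pv_le_bnd (min_le_min h_a1_a2 le_rfl)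
  by_cases h1 : G.walkInf b false true ≤ (R : ℕ∞)
  · have : G.qv R b = min (G.walkInf b true true) (R : ℕ∞) := by
      unfold qv; rw [if_pos h1]; rfl
    rw [this]; exact hp1
  · have hqb : G.qv R b = min (G.bnd R b true true) (G.Bnd R b false) := by
      unfold qv; rw [if_neg h1]
    have hKa : ¬ G.walkInf a true true ≤ (R : ℕ∞) := by
      intro hle
      obtain ⟨m, ⟨z, hw, hz⟩, heq, hmR⟩ := walkInf_attain hle
      have := cross_inf_I (joins_symm he) hI (le_of_eq heq)
      exact h1 (le_trans this (by exact_mod_cast hmR))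
    have hA2A1 : G.walkSup a true ≤ G.walkSup b false :=
      enat_le_of_forall_coe (fun m hm => cross_sup_I hG (joins_symm he) hI ha hm)
    have hp2 : G.pv R a ≤ min (G.walkSup b false) (R : ℕ∞) := by
      have : G.pv R a ≤ G.Bnd R a true := by
        unfold pv; rw [if_neg hKa]; exact min_le_right _ _
      exact le_trans this (min_le_min hA2A1 le_rfl)
    rw [hqb]
    exact le_min hp1 hp2

lemma xval_nonneg {R : ℕ} (v : V) : 0 ≤ G.xval R v := by
  unfold xval; split_ifs
  · positivity
  · exact le_refl 0

lemma xval_le_one (hG : G.WellFormed) {R : ℕ} (hR : 1 ≤ R) (v : V) : G.xval R v ≤ 1 := by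
  by_cases hv : G.isX v
  · rw [xval_eq hv]
    obtain ⟨hPeq, hPle⟩ := pv_toNat (G := G) (R := R) (v := v)
    have hP1 : 1 ≤ (G.pv R v).toNat := by
      have h := one_le_pv hG hR hv; rw [hPeq] at h; exact_mod_cast h
    have h1 : (1:ℝ) ≤ ((G.pv R v).toNat : ℝ) := by exact_mod_cast hP1
    have h2 : (0:ℝ) ≤ ((G.qv R v).toNat : ℝ) := by positivity
    rw [div_le_one (by linarith)]
    linarith
  · rw [xval_eq_zero hv]; norm_num

lemma xval_feasible (hG : G.WellFormed) {R : ℕ} (hR : 1 ≤ R) : G.Feasible (G.xval R) := by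
  refine ⟨xval_nonneg, fun a ha => xval_eq_zero ha, ?_⟩
  intro e a b hj hI
  by_cases hxa : G.isX a <;> by_cases hxb : G.isX b
  · -- both x-vertices : p_a ≤ q_b and p_b ≤ q_a
    obtain ⟨hPeq, hPle⟩ := pv_toNat (G := G) (R := R) (v := a)
    obtain ⟨hQeq, hQle⟩ := qv_toNat (G := G) (R := R) (v := a)
    obtain ⟨hP'eq, hP'le⟩ := pv_toNat (G := G) (R := R) (v := b)
    obtain ⟨hQ'eq, hQ'le⟩ := qv_toNat (G := G) (R := R) (v := b)
    have h1 : G.pv R a ≤ G.qv R b := pv_le_qv_I hG hj hI hxa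
    have h2 : G.pv R b ≤ G.qv R a := pv_le_qv_I hG (joins_symm hj) hI hxb
    have h1' : (G.pv R a).toNat ≤ (G.qv R b).toNat := by
      rw [hPeq, hQ'eq] at h1; exact_mod_cast h1
    have h2' : (G.pv R b).toNat ≤ (G.qv R a).toNat := by
      rw [hP'eq, hQeq] at h2; exact_mod_cast h2
    have hPa1 : 1 ≤ (G.pv R a).toNat := by
      have h := one_le_pv hG hR hxa; rw [hPeq] at h; exact_mod_cast h
    have hPb1 : 1 ≤ (G.pv R b).toNat := by
      have h := one_le_pv hG hR hxb; rw [hP'eq] at h; exact_mod_cast h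
    rw [xval_eq hxa, xval_eq hxb]
    refine leafI (by exact_mod_cast hPa1) (by exact_mod_cast hPb1)
      (by positivity) (by positivity) ?_
    have : (G.pv R a).toNat * (G.pv R b).toNat ≤ (G.qv R a).toNat * (G.qv R b).toNat := by
      calc (G.pv R a).toNat * (G.pv R b).toNat ≤ (G.qv R b).toNat * (G.qv R a).toNat :=
            Nat.mul_le_mul h1' h2'
        _ = (G.qv R a).toNat * (G.qv R b).toNat := Nat.mul_comm _ _
    exact_mod_cast this
  · rw [xval_eq_zero hxb]
    have := xval_le_one hG hR (v := a)
    linarith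
  · rw [xval_eq_zero hxa]
    have := xval_le_one hG hR (v := b)
    linarith
  · rcases hG.2.2.2 e a b hj with h | h
    · exact absurd h hxa
    · exact absurd h hxb

end ColoredMultigraph

/-- Let `v` and `u` be K-adjacent x-vertices. Then for every
feasible solution `x*`, the output values of the local algorithm satisfy
`x_v + x_u ≥ (1 − 1/R) * ω(x*)`. Consequently, together with the corresponding
bound when one endpoint of a K-edge is a 0-vertex, the output of the algorithm
is a feasible solution whose utility is at least `(1 − 1/R)` times the optimal
utility. -/
theorem stmt_19 {V E : Type} (G : ColoredMultigraph V E) (hG : G.WellFormed)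
    (R : ℕ) (hR : 1 ≤ R) :
    (∀ v u : V, G.isX v → G.isX u → (∃ e, G.Joins e v u ∧ G.isK e) →
      ∀ xstar : V → ℝ, G.Feasible xstar →
        (1 - 1 / (R : ℝ)) * G.utility xstar ≤ G.xval R v + G.xval R u) ∧
    G.Feasible (G.xval R) ∧
    (∀ xstar : V → ℝ, G.Feasible xstar →
      (1 - 1 / (R : ℝ)) * G.utility xstar ≤ G.utility (G.xval R)) := by
  refine ⟨?_, ColoredMultigraph.xval_feasible hG hR, ?_⟩
  · rintro v u hv hu ⟨e, he, heK⟩ xstar hx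
    exact ColoredMultigraph.pair_bound hG hR hv hu he heK hx
  · intro xstar hx
    rcases Set.eq_empty_or_nonempty
      {r : ℝ | ∃ e a b, G.Joins e a b ∧ G.isK e ∧ r = G.xval R a + G.xval R b} with hS | hS
    · have hempty' : {r : ℝ | ∃ e a b, G.Joins e a b ∧ G.isK e ∧ r = xstar a + xstar b} = ∅ := by
        rw [Set.eq_empty_iff_forall_notMem] at hS ⊢
        rintro r ⟨e, a, b, hj, hK, rfl⟩
        exact hS (G.xval R a + G.xval R b) ⟨e, a, b, hj, hK, rfl⟩
      unfold ColoredMultigraph.utility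
      rw [hS, hempty', Real.sInf_empty]
      simp
    · have : (1 - 1/(R:ℝ)) * G.utility xstar ≤
          sInf {r : ℝ | ∃ e a b, G.Joins e a b ∧ G.isK e ∧ r = G.xval R a + G.xval R b} := by
        refine le_csInf hS ?_
        rintro r ⟨e, a, b, hj, hK, rfl⟩
        by_cases hxa : G.isX a <;> by_cases hxb : G.isX b
        · exact ColoredMultigraph.pair_bound hG hR hxa hxb hj hK hx
        · have h := ColoredMultigraph.zero_bound hG hR hxa hxb hj hK hx
          rw [ColoredMultigraph.xval_eq_zero hxb]
          linarith
        · have h := ColoredMultigraph.zero_bound hG hR hxb hxa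
            (ColoredMultigraph.joins_symm hj) hK hx
          rw [ColoredMultigraph.xval_eq_zero hxa]
          linarith
        · rcases hG.2.2.2 e a b hj with h | h
          · exact absurd h hxa
          · exact absurd h hxb
      exact this
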